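/- Let O ∈ ℂ[[λ,μ]] satisfy O(λ,μ) = O(μ,λ) and O(−λ,−μ) = −O(λ,μ). Then O satisfies the identity O(λ,μ) + e^{μ}·O(μ,−λ−μ) + e^{−λ}·O(λ,−λ−μ) = 0 in ℂ[[λ,μ]] if and only if there exists h̃ ∈ ℂ[[λ,μ]] with h̃(λ,μ) = h̃(μ,λ) = h̃(−λ,−μ) = h̃(λ,−λ−μ) such that 2·O(λ,μ) = (e^{λ+μ} − e^{−λ−μ})·h̃(λ,μ). -/

import Mathlib

noncomputable section

open Finset MvPowerSeries

/-- Total degree of a monomial in two variables. -/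
def deg (d : Fin 2 →₀ ℕ) : ℕ := d 0 + d 1

/-- Formal substitution `f(p, q)` of two polynomials `p`, `q` with zero constant term
for the variables of a two-variable formal power series `f`: the coefficient of a
monomial `d` in `f(p,q)` is `∑_{i,j} (coeff of λ^i μ^j in f) ⬝ (coeff of d in pⁱ·qʲ)`,
a finite sum since `coeff d (pⁱ·qʲ) = 0` whenever `i + j > deg d`. -/
def sub2 (p q : MvPolynomial (Fin 2) ℂ) (f : MvPowerSeries (Fin 2) ℂ) :
    MvPowerSeries (Fin 2) ℂ :=
  fun d => ∑ ij ∈ Finset.range (deg d + 1) ×ˢ Finset.range (deg d + 1),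
    MvPowerSeries.coeff (Finsupp.single 0 ij.1 + Finsupp.single 1 ij.2) f *
      MvPolynomial.coeff d (p ^ ij.1 * q ^ ij.2)

/-- The formal exponential `exp g = ∑ₖ gᵏ/k!` of a two-variable formal power series `g`
with zero constant term. -/
def expMv (g : MvPowerSeries (Fin 2) ℂ) : MvPowerSeries (Fin 2) ℂ :=
  fun d => ∑ k ∈ Finset.range (deg d + 1), MvPowerSeries.coeff d (g ^ k) / (k.factorial : ℂ)

/-- `f(μ, −λ−μ)`. -/
def s₁ (f : MvPowerSeries (Fin 2) ℂ) : MvPowerSeries (Fin 2) ℂ :=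
  sub2 (MvPolynomial.X 1) (-MvPolynomial.X 0 - MvPolynomial.X 1) f

/-- `f(λ, −λ−μ)`. -/
def s₂ (f : MvPowerSeries (Fin 2) ℂ) : MvPowerSeries (Fin 2) ℂ :=
  sub2 (MvPolynomial.X 0) (-MvPolynomial.X 0 - MvPolynomial.X 1) f

/-- `f(μ, λ)`. -/
def swapS (f : MvPowerSeries (Fin 2) ℂ) : MvPowerSeries (Fin 2) ℂ :=
  sub2 (MvPolynomial.X 1) (MvPolynomial.X 0) f

/-- `f(−λ, −μ)`. -/
def negS (f : MvPowerSeries (Fin 2) ℂ) : MvPowerSeries (Fin 2) ℂ :=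
  sub2 (-MvPolynomial.X 0) (-MvPolynomial.X 1) f

/-- Equation (1.5b), the compressed hexagon equation:
`λμ(λ+μ)·( f(λ,μ) + e^{μ}·f(μ,−λ−μ) + e^{−λ}·f(λ,−λ−μ) ) = λ(e^{μ} − 1) + μ(e^{−λ} − 1)`. -/
def Eq15b (f : MvPowerSeries (Fin 2) ℂ) : Prop :=
  (X 0 : MvPowerSeries (Fin 2) ℂ) * X 1 * (X 0 + X 1) *
      (f + expMv (X 1) * s₁ f + expMv (-X 0) * s₂ f)
    = X 0 * (expMv (X 1) - 1) + X 1 * (expMv (-X 0) - 1)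

/-!
Write `D = e^{λ+μ} - e^{-λ-μ}`, `S_λ = e^λ - e^{-λ}` and `S_μ = e^μ - e^{-μ}` (below
`sinhLin ![1, 1]`, `sinhLin ![1, 0]` and `sinhLin ![0, 1]`).
Restricting the identity to the antidiagonal `μ = -λ` and using oddness gives `O(λ,-λ) = 0`,
so `λ + μ` divides `O`; since `D` is `λ + μ` times a unit, `2O = D·h̃` for some `h̃`, and the
symmetry and oddness of `O` and `D` pass to `h̃`. Substituting `2O = D·h̃` turns the identity into
`D·h̃ = e^μ S_λ·h̃(μ,-λ-μ) + e^{-λ} S_μ·h̃(λ,-λ-μ)`; subtracting its image under `λ ↔ μ` leaves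
`S_λ S_μ·(h̃(λ,-λ-μ) - h̃(μ,-λ-μ)) = 0`, and then the exponential identity
`D = e^μ S_λ + e^{-λ} S_μ` forces `h̃(λ,-λ-μ) = h̃`. Read backwards, the same identity gives the
converse.

All substitutions involved are linear: `linSubst M` is the substitution given by a matrix `M`,
and composing substitutions multiplies matrices.
-/

open Matrix

section LinearSubstitution

variable {σ R : Type*} [Fintype σ] [CommRing R]

def linForm (v : σ → R) : MvPowerSeries σ R := ∑ j, v j • X j

@[simp]
lemma constantCoeff_linForm (v : σ → R) : constantCoeff (linForm v) = 0 := by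
  simp [linForm]

lemma linForm_add (v w : σ → R) : linForm (v + w) = linForm v + linForm w := by
  simp [linForm, add_smul, Finset.sum_add_distrib]

lemma coeff_single_linForm [DecidableEq σ] (v : σ → R) (i : σ) :
    coeff (Finsupp.single i 1) (linForm v) = v i := by
  simp [linForm, coeff_X, Finsupp.single_eq_single_iff]

lemma coeff_single_linForm_mul [DecidableEq σ] (v : σ → R) (G : MvPowerSeries σ R) (i : σ) :
    coeff (Finsupp.single i 1) (linForm v * G) = v i * constantCoeff G := by
  simp only [linForm, Finset.sum_mul, smul_mul_assoc, map_sum, map_smul, X_def,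
    coeff_monomial_mul, Finsupp.single_le_iff, one_mul, smul_eq_mul]
  rw [Finset.sum_eq_single i (fun j _ hj => by simp [hj]) (by simp)]
  simp

lemma hasSubst_linForm (M : Matrix σ σ R) : HasSubst fun i => linForm (M i) :=
  hasSubst_of_constantCoeff_zero (by simp)

/-- Row `i` of `M` is the image of `X i`; e.g. `linSubst !![0, 1; -1, -1] f = f(μ, -λ-μ)`. -/
def linSubst (M : Matrix σ σ R) : MvPowerSeries σ R →ₐ[R] MvPowerSeries σ R :=
  substAlgHom (hasSubst_linForm M)

lemma linSubst_apply (M : Matrix σ σ R) (f : MvPowerSeries σ R) :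
    linSubst M f = subst (fun i => linForm (M i)) f :=
  substAlgHom_apply _ f

lemma linSubst_X (M : Matrix σ σ R) (i : σ) : linSubst M (X i) = linForm (M i) :=
  substAlgHom_X _ i

lemma linSubst_linForm (M : Matrix σ σ R) (v : σ → R) :
    linSubst M (linForm v) = linForm (v ᵥ* M) := by
  simp only [linForm, map_sum, map_smul, linSubst_X, Finset.smul_sum, smul_smul,
    vecMul, dotProduct, Finset.sum_smul]
  exact Finset.sum_comm

lemma linSubst_linSubst (M N : Matrix σ σ R) (f : MvPowerSeries σ R) :
    linSubst M (linSubst N f) = linSubst (N * M) f := by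
  rw [linSubst, linSubst, substAlgHom_comp_substAlgHom_apply, substAlgHom_apply, linSubst_apply]
  congr 1
  funext i
  rw [substAlgHom_apply, ← linSubst_apply, linSubst_linForm]
  rfl

lemma linSubst_linSubst_of_mul_eq {M N P : Matrix σ σ R} (h : N * M = P)
    (f : MvPowerSeries σ R) : linSubst M (linSubst N f) = linSubst P f := by
  rw [linSubst_linSubst, h]

lemma linSubst_one [DecidableEq σ] (f : MvPowerSeries σ R) : linSubst 1 f = f := by
  have : (fun i => linForm ((1 : Matrix σ σ R) i)) = X := by
    funext i
    simp [linForm, Matrix.one_apply]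
  rw [linSubst_apply, this, subst_self, id]

lemma linSubst_eq_self_of_two_mul_eq [IsDomain R] {O D h : MvPowerSeries σ R}
    {M : Matrix σ σ R} {c : R} (hD : D ≠ 0) (hc : c ≠ 0) (hOh : 2 * O = D * h)
    (hMO : linSubst M O = c • O) (hMD : linSubst M D = c • D) : linSubst M h = h := by
  have h' := congrArg (linSubst M) hOh
  rw [map_mul, map_mul, map_ofNat, hMO, hMD, mul_smul_comm, hOh, smul_mul_assoc,
    smul_eq_C_mul, smul_eq_C_mul] at h'
  have hC : C c ≠ (0 : MvPowerSeries σ R) := fun h0 => hc (by simpa using congrArg constantCoeff h0)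
  exact (mul_left_cancel₀ hD (mul_left_cancel₀ hC h')).symm

end LinearSubstitution

section Order

variable {σ R : Type*} [CommRing R] {f g : MvPowerSeries σ R} {d : σ →₀ ℕ}

lemma coeff_pow_mul_pow_eq_zero_of_degree_lt (hf : constantCoeff f = 0)
    (hg : constantCoeff g = 0) {i j : ℕ} (h : d.degree < i + j) : coeff d (f ^ i * g ^ j) = 0 := by
  refine coeff_of_lt_order (lt_of_lt_of_le ?_ le_order_mul)
  exact lt_of_lt_of_le (by exact_mod_cast h) (add_le_add
    (le_order_pow_of_constantCoeff_eq_zero i hf) (le_order_pow_of_constantCoeff_eq_zero j hg))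

lemma coeff_pow_eq_zero_of_degree_lt (hf : constantCoeff f = 0) {n : ℕ} (h : d.degree < n) :
    coeff d (f ^ n) = 0 := by
  simpa using coeff_pow_mul_pow_eq_zero_of_degree_lt hf hf (j := 0) h

end Order

lemma single_zero_add_single_one (d : Fin 2 →₀ ℕ) :
    Finsupp.single 0 (d 0) + Finsupp.single 1 (d 1) = d := by
  ext i
  fin_cases i <;> simp

lemma coeff_X_add_X_pow {A : Type*} [CommRing A] (d : Fin 2 →₀ ℕ) (n : ℕ) :
    coeff d ((X 0 + X 1 : MvPowerSeries (Fin 2) A) ^ n) =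
      if d 0 + d 1 = n then (n.choose (d 0) : A) else 0 := by
  rw [← MvPolynomial.coe_X, ← MvPolynomial.coe_X, ← MvPolynomial.coe_add, ← MvPolynomial.coe_pow,
    MvPolynomial.coeff_coe, MvPolynomial.coeff_add_pow]
  simp

lemma subst_powerSeries_subst {σ τ A : Type*} [CommRing A] {a : σ → MvPowerSeries τ A}
    (ha : HasSubst a) {g : MvPowerSeries σ A} (hg : constantCoeff g = 0) (f : PowerSeries A) :
    subst a (f.subst g) = f.subst (subst a g) :=
  subst_comp_subst_apply (PowerSeries.HasSubst.of_constantCoeff_zero hg).const ha f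

lemma coeff_subst_fin_two {τ A : Type*} [CommRing A] {a b : MvPowerSeries τ A}
    (ha : HasSubst ![a, b]) (f : MvPowerSeries (Fin 2) A) (e : τ →₀ ℕ) :
    coeff e (subst ![a, b] f) = ∑ᶠ d, coeff d f * coeff e (a ^ d 0 * b ^ d 1) := by
  rw [coeff_subst ha]
  refine finsum_congr fun d => ?_
  rw [Finsupp.prod_fintype _ _ (fun _ => pow_zero _), Fin.prod_univ_two, smul_eq_mul]
  rfl

section Exponential

variable {A : Type*} [CommRing A] [Algebra ℚ A]

lemma isUnit_two_of_algebraRat : IsUnit (2 : A) := by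
  rw [← map_ofNat (algebraMap ℚ A) 2]
  exact (isUnit_iff_ne_zero.2 two_ne_zero).map _

lemma exp_subst_X_add_X :
    (PowerSeries.exp A).subst (X 0 + X 1 : MvPowerSeries (Fin 2) A) =
      (PowerSeries.exp A).subst (X 0 : MvPowerSeries (Fin 2) A) *
        (PowerSeries.exp A).subst (X 1 : MvPowerSeries (Fin 2) A) := by
  ext d
  rw [PowerSeries.coeff_subst (PowerSeries.HasSubst.of_constantCoeff_zero (by simp)),
    finsum_eq_single _ (d 0 + d 1) (fun n hn => by simp [coeff_X_add_X_pow, Ne.symm hn]),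
    coeff_mul, Finset.sum_eq_single (Finsupp.single 0 (d 0), Finsupp.single 1 (d 1))]
  · simp only [PowerSeries.coeff_subst_single, coeff_X_add_X_pow, PowerSeries.coeff_exp,
      Finsupp.single_eq_same, if_true, smul_eq_mul]
    rw [← map_natCast (algebraMap ℚ A), ← map_mul, ← map_mul]
    congr 1
    have := Nat.choose_mul_factorial_mul_factorial (Nat.le_add_right (d 0) (d 1))
    rw [Nat.add_sub_cancel_left] at this
    field_simp
    exact_mod_cast this
  · rintro ⟨u, v⟩ huv hne
    rw [Finset.HasAntidiagonal.mem_antidiagonal] at huv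
    simp only [PowerSeries.coeff_subst_single]
    split_ifs with hu hv <;> try simp only [zero_mul, mul_zero]
    rw [hu, hv] at huv hne
    subst huv
    simp at hne
  · exact fun h => absurd (Finset.HasAntidiagonal.mem_antidiagonal.2
      (single_zero_add_single_one d)) h

lemma exp_subst_add {τ : Type*} {g h : MvPowerSeries τ A} (hg : constantCoeff g = 0)
    (hh : constantCoeff h = 0) :
    (PowerSeries.exp A).subst (g + h) =
      (PowerSeries.exp A).subst g * (PowerSeries.exp A).subst h := by
  have ha : HasSubst ![g, h] := hasSubst_of_constantCoeff_zero (fun i => by fin_cases i <;> simpa)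
  have := congrArg (subst (R := A) ![g, h]) (exp_subst_X_add_X (A := A))
  rwa [subst_mul ha, subst_powerSeries_subst ha (by simp), subst_powerSeries_subst ha (by simp),
    subst_powerSeries_subst ha (by simp), subst_add ha, subst_X ha, subst_X ha] at this

end Exponential

section ExpLin

variable {σ A : Type*} [Fintype σ] [CommRing A] [Algebra ℚ A]

def expLin (v : σ → A) : MvPowerSeries σ A := (PowerSeries.exp A).subst (linForm v)

lemma expLin_add (v w : σ → A) : expLin (v + w) = expLin v * expLin w := by
  rw [expLin, linForm_add, exp_subst_add (by simp) (by simp), expLin, expLin]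

lemma linSubst_expLin (M : Matrix σ σ A) (v : σ → A) :
    linSubst M (expLin v) = expLin (v ᵥ* M) := by
  rw [linSubst_apply, expLin, subst_powerSeries_subst (hasSubst_linForm M) (by simp),
    ← linSubst_apply, linSubst_linForm, expLin]

lemma coeff_single_expLin [DecidableEq σ] (v : σ → A) (i : σ) :
    coeff (Finsupp.single i 1) (expLin v) = v i := by
  rw [expLin, PowerSeries.coeff_subst (PowerSeries.HasSubst.of_constantCoeff_zero (by simp)),
    finsum_eq_single _ 1]
  · simp [coeff_single_linForm]
  · intro n hn
    rcases Nat.lt_or_gt_of_ne hn with h | h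
    · simp [Nat.lt_one_iff.1 h, coeff_one]
    · rw [coeff_pow_eq_zero_of_degree_lt (by simp) (by simpa using h), smul_zero]

def sinhLin (v : σ → A) : MvPowerSeries σ A := expLin v - expLin (-v)

lemma sinhLin_neg (v : σ → A) : sinhLin (-v) = -sinhLin v := by
  rw [sinhLin, sinhLin, neg_neg, neg_sub]

lemma linSubst_sinhLin (M : Matrix σ σ A) (v : σ → A) :
    linSubst M (sinhLin v) = sinhLin (v ᵥ* M) := by
  rw [sinhLin, map_sub, linSubst_expLin, linSubst_expLin, Matrix.neg_vecMul, sinhLin]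

lemma coeff_single_sinhLin [DecidableEq σ] (v : σ → A) (i : σ) :
    coeff (Finsupp.single i 1) (sinhLin v) = 2 * v i := by
  rw [sinhLin, map_sub, coeff_single_expLin, coeff_single_expLin, Pi.neg_apply]
  ring

lemma sinhLin_ne_zero {v : σ → A} (hv : v ≠ 0) : sinhLin v ≠ 0 := by
  classical
  obtain ⟨i, hi⟩ := Function.ne_iff.1 hv
  intro h
  have := coeff_single_sinhLin v i
  rw [h, map_zero, eq_comm, isUnit_two_of_algebraRat.mul_right_eq_zero] at this
  exact hi this

end ExpLin

section Divisibility

variable {R : Type*} [CommRing R]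

lemma X_one_dvd_of_linSubst_eq_zero {F : MvPowerSeries (Fin 2) R}
    (h : linSubst !![1, 0; 0, 0] F = 0) : X 1 ∣ F := by
  have hfam : (fun i => linForm ((!![1, 0; 0, 0] : Matrix (Fin 2) (Fin 2) R) i)) = ![X 0, 0] := by
    funext i
    fin_cases i <;> simp [linForm]
  refine X_dvd_iff.2 fun m hm => ?_
  have hm' : Finsupp.single 0 (m 0) = m := by simpa [hm] using single_zero_add_single_one m
  have hcoeff := congrArg (coeff m) h
  rw [linSubst_apply, hfam, coeff_subst_fin_two (hfam ▸ hasSubst_linForm _),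
    finsum_eq_single _ m] at hcoeff
  · simpa [hm, coeff_X_pow, hm'] using hcoeff
  · intro d hd
    rcases eq_or_ne (d 1) 0 with hd1 | hd1
    · have hd' : d = Finsupp.single 0 (d 0) := by
        simpa [hd1] using (single_zero_add_single_one d).symm
      have : m ≠ Finsupp.single 0 (d 0) := fun h => hd (hd'.trans h.symm)
      simp [hd1, coeff_X_pow, this]
    · simp [zero_pow hd1]

lemma linForm_one_one_dvd_of_linSubst_eq_zero {f : MvPowerSeries (Fin 2) R}
    (h : linSubst !![1, 0; -1, 0] f = 0) : linForm ![1, 1] ∣ f := by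
  -- in the coordinates `(λ, λ + μ)` the hypothesis says that `f` vanishes on `λ + μ = 0`
  obtain ⟨Q, hQ⟩ : X 1 ∣ linSubst !![1, 0; -1, 1] f := by
    refine X_one_dvd_of_linSubst_eq_zero ?_
    rw [linSubst_linSubst_of_mul_eq (P := !![1, 0; -1, 0]) (by simp), h]
  refine ⟨linSubst !![1, 0; 1, 1] Q, ?_⟩
  have hf : f = linSubst !![1, 0; 1, 1] (linSubst !![1, 0; -1, 1] f) := by
    rw [linSubst_linSubst_of_mul_eq (P := 1) (by simp [Matrix.one_fin_two]), linSubst_one]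
  rw [hf, hQ, map_mul, linSubst_X]
  rfl

end Divisibility

section Hexagon

variable {A : Type*} [CommRing A] [Algebra ℚ A] {O ht : MvPowerSeries (Fin 2) A}

lemma sinhLin_one_one_eq_linForm_mul_unit :
    ∃ G : MvPowerSeries (Fin 2) A, IsUnit G ∧ sinhLin ![1, 1] = linForm ![1, 1] * G := by
  obtain ⟨G, hG⟩ := linForm_one_one_dvd_of_linSubst_eq_zero (f := sinhLin (![1, 1] : Fin 2 → A))
    (by rw [linSubst_sinhLin]; simp [sinhLin])
  refine ⟨G, isUnit_iff_constantCoeff.2 ?_, hG⟩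
  have h := coeff_single_sinhLin (![1, 1] : Fin 2 → A) 0
  rw [hG, coeff_single_linForm_mul] at h
  simp only [Matrix.cons_val_zero, mul_one, one_mul] at h
  exact h ▸ isUnit_two_of_algebraRat

lemma exists_two_mul_eq_sinhLin_mul (hO : linSubst !![1, 0; -1, 0] O = 0) :
    ∃ ht, 2 * O = sinhLin ![1, 1] * ht := by
  obtain ⟨Q, hQ⟩ := linForm_one_one_dvd_of_linSubst_eq_zero hO
  obtain ⟨G, hG, hsinh⟩ := sinhLin_one_one_eq_linForm_mul_unit (A := A)
  refine ⟨2 * Q * ↑hG.unit⁻¹, ?_⟩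
  rw [hsinh, hQ]
  linear_combination (-2 * linForm ![1, 1] * Q) * hG.mul_val_inv

lemma sinhLin_one_one_eq_add :
    sinhLin (![1, 1] : Fin 2 → A) =
      expLin ![0, 1] * sinhLin ![1, 0] + expLin ![-1, 0] * sinhLin ![0, 1] := by
  simp only [sinhLin, mul_sub, ← expLin_add]
  simp

def hexagon (O : MvPowerSeries (Fin 2) A) : MvPowerSeries (Fin 2) A :=
  O + expLin ![0, 1] * linSubst !![0, 1; -1, -1] O + expLin ![-1, 0] * linSubst !![1, 0; -1, -1] O

lemma linSubst_antidiag_eq_zero (hodd : linSubst (-1) O = -O) (hO : hexagon O = 0) :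
    linSubst !![1, 0; -1, 0] O = 0 := by
  -- on `μ = -λ` both exponentials become `e^{-λ}`, and the two substituted terms `O(-λ, 0)`,
  -- `O(λ, 0)` cancel by oddness
  have hneg : linSubst !![-1, 0; 0, 0] O = -linSubst !![1, 0; 0, 0] O := by
    rw [← map_neg, ← hodd, linSubst_linSubst_of_mul_eq (P := !![-1, 0; 0, 0]) (by simp)]
  have h := congrArg (linSubst !![1, 0; -1, 0]) hO
  rw [hexagon, map_zero, map_add, map_add, map_mul, map_mul, linSubst_expLin, linSubst_expLin,
    linSubst_linSubst_of_mul_eq (P := !![-1, 0; 0, 0]) (by simp),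
    linSubst_linSubst_of_mul_eq (P := !![1, 0; 0, 0]) (by simp), hneg] at h
  simpa using h

lemma two_mul_hexagon (hOh : 2 * O = sinhLin ![1, 1] * ht) :
    2 * hexagon O = sinhLin ![1, 1] * ht
      - expLin ![0, 1] * sinhLin ![1, 0] * linSubst !![0, 1; -1, -1] ht
      - expLin ![-1, 0] * sinhLin ![0, 1] * linSubst !![1, 0; -1, -1] ht := by
  have h₁ := congrArg (linSubst !![0, 1; -1, -1]) hOh
  have h₂ := congrArg (linSubst !![1, 0; -1, -1]) hOh
  rw [map_mul, map_mul, map_ofNat, linSubst_sinhLin,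
    show (![1, 1] : Fin 2 → A) ᵥ* !![0, 1; -1, -1] = -![1, 0] by simp, sinhLin_neg] at h₁
  rw [map_mul, map_mul, map_ofNat, linSubst_sinhLin,
    show (![1, 1] : Fin 2 → A) ᵥ* !![1, 0; -1, -1] = -![0, 1] by simp, sinhLin_neg] at h₂
  rw [hexagon]
  linear_combination hOh + expLin ![0, 1] * h₁ + expLin ![-1, 0] * h₂

lemma hexagon_eq_zero (hswap : linSubst !![0, 1; 1, 0] ht = ht)
    (hρ : linSubst !![1, 0; -1, -1] ht = ht) (hOh : 2 * O = sinhLin ![1, 1] * ht) :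
    hexagon O = 0 := by
  have hσ : linSubst !![0, 1; -1, -1] ht = ht := by
    rw [← linSubst_linSubst_of_mul_eq (M := !![0, 1; 1, 0]) (N := !![1, 0; -1, -1]) (by simp), hρ,
      hswap]
  have h2 : 2 * hexagon O = 0 := by
    rw [two_mul_hexagon hOh, hσ, hρ]
    linear_combination ht * sinhLin_one_one_eq_add (A := A)
  have h2u : IsUnit (2 : MvPowerSeries (Fin 2) A) :=
    isUnit_iff_constantCoeff.2 (by rw [map_ofNat]; exact isUnit_two_of_algebraRat)
  exact h2u.mul_right_eq_zero.1 h2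

lemma linSubst_eq_self_of_hexagon [IsDomain A] (hO : hexagon O = 0)
    (hOh : 2 * O = sinhLin ![1, 1] * ht) (hswap : linSubst !![0, 1; 1, 0] ht = ht) :
    linSubst !![1, 0; -1, -1] ht = ht := by
  set B := linSubst !![0, 1; -1, -1] ht with hB
  have hτB : linSubst !![0, 1; 1, 0] B = linSubst !![1, 0; -1, -1] ht :=
    linSubst_linSubst_of_mul_eq (by simp) ht
  have hττ : linSubst !![0, 1; 1, 0] (linSubst !![1, 0; -1, -1] ht) = B :=
    linSubst_linSubst_of_mul_eq (by simp) ht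
  have hE₁ := two_mul_hexagon hOh
  rw [hO, mul_zero, ← hB] at hE₁
  have hE₂ := congrArg (linSubst !![0, 1; 1, 0]) hE₁
  simp only [map_zero, map_sub, map_mul, linSubst_sinhLin, linSubst_expLin, hswap, hτB, hττ,
    vecMul_cons, head_cons, tail_cons, empty_vecMul, one_smul, zero_smul, neg_smul,
    add_cons, zero_add, add_zero, empty_add_empty, neg_cons, neg_zero, Matrix.neg_empty] at hE₂
  have hC : linSubst !![1, 0; -1, -1] ht = B := by
    have : sinhLin ![1, 0] * sinhLin ![0, 1] * (linSubst !![1, 0; -1, -1] ht - B) = 0 := by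
      simp only [sinhLin, Matrix.neg_cons, neg_zero, Matrix.neg_empty] at hE₁ hE₂ ⊢
      linear_combination hE₂ - hE₁
    refine sub_eq_zero.1 ((mul_eq_zero.1 this).resolve_left (mul_ne_zero ?_ ?_)) <;>
      exact sinhLin_ne_zero (by simp)
  have hD : sinhLin ![1, 1] * ht = sinhLin ![1, 1] * B := by
    rw [hC] at hE₁
    linear_combination -hE₁ - B * sinhLin_one_one_eq_add (A := A)
  rw [hC, mul_left_cancel₀ (sinhLin_ne_zero (by simp)) hD]

end Hexagon

section ExplicitSubstitutions

@[simp, norm_cast]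
lemma MvPolynomial.coe_neg {σ R : Type*} [CommRing R] (p : MvPolynomial σ R) :
    ((-p : MvPolynomial σ R) : MvPowerSeries σ R) = -p :=
  map_neg MvPolynomial.coeToMvPowerSeries.ringHom p

@[simp, norm_cast]
lemma MvPolynomial.coe_sub {σ R : Type*} [CommRing R] (p q : MvPolynomial σ R) :
    ((p - q : MvPolynomial σ R) : MvPowerSeries σ R) = p - q :=
  map_sub MvPolynomial.coeToMvPowerSeries.ringHom p q

lemma deg_eq_degree (d : Fin 2 →₀ ℕ) : deg d = d.degree := by
  rw [Finsupp.degree_eq_sum, Fin.sum_univ_two, deg]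

lemma sub2_eq_subst {p q : MvPolynomial (Fin 2) ℂ} (hp : p.constantCoeff = 0)
    (hq : q.constantCoeff = 0) (f : MvPowerSeries (Fin 2) ℂ) :
    sub2 p q f = subst ![(p : MvPowerSeries (Fin 2) ℂ), q] f := by
  ext e
  rw [coeff_subst_fin_two (hasSubst_of_constantCoeff_zero (fun i => by fin_cases i <;> simpa))]
  simp only [← MvPolynomial.coe_pow, ← MvPolynomial.coe_mul, MvPolynomial.coeff_coe]
  let pr : ℕ × ℕ → Fin 2 →₀ ℕ := fun ij => Finsupp.single 0 ij.1 + Finsupp.single 1 ij.2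
  have hpr : Function.Injective pr := fun a b h =>
    Prod.ext (by simpa [pr] using congrArg (· 0) h) (by simpa [pr] using congrArg (· 1) h)
  rw [finsum_eq_sum_of_support_subset
      (s := (Finset.range (deg e + 1) ×ˢ Finset.range (deg e + 1)).image pr),
    Finset.sum_image (fun a _ b _ h => hpr h)]
  · rw [coeff_apply, sub2]
    refine Finset.sum_congr rfl fun ij _ => ?_
    simp [pr]
  · intro d hd
    have hdeg : d 0 + d 1 ≤ deg e := by
      by_contra! hlt
      rw [deg_eq_degree] at hlt
      have h0 := coeff_pow_mul_pow_eq_zero_of_degree_lt (f := (p : MvPowerSeries (Fin 2) ℂ))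
        (g := q) (by simpa) (by simpa) hlt
      rw [← MvPolynomial.coe_pow, ← MvPolynomial.coe_pow, ← MvPolynomial.coe_mul,
        MvPolynomial.coeff_coe] at h0
      exact hd (by simp [h0])
    exact Finset.mem_image.2 ⟨(d 0, d 1), by simp only [Finset.mem_product, Finset.mem_range]; omega,
      single_zero_add_single_one d⟩

lemma sub2_eq_linSubst {p q : MvPolynomial (Fin 2) ℂ} (M : Matrix (Fin 2) (Fin 2) ℂ)
    (hp : (p : MvPowerSeries (Fin 2) ℂ) = linForm (M 0))
    (hq : (q : MvPowerSeries (Fin 2) ℂ) = linForm (M 1)) (f : MvPowerSeries (Fin 2) ℂ) :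
    sub2 p q f = linSubst M f := by
  have hp0 : p.constantCoeff = 0 := by
    rw [MvPolynomial.constantCoeff_eq, ← MvPolynomial.coeff_coe, hp, coeff_zero_eq_constantCoeff,
      constantCoeff_linForm]
  have hq0 : q.constantCoeff = 0 := by
    rw [MvPolynomial.constantCoeff_eq, ← MvPolynomial.coeff_coe, hq, coeff_zero_eq_constantCoeff,
      constantCoeff_linForm]
  rw [sub2_eq_subst hp0 hq0, linSubst_apply]
  congr 1
  funext i
  fin_cases i
  exacts [hp, hq]

lemma s₁_eq_linSubst (f : MvPowerSeries (Fin 2) ℂ) : s₁ f = linSubst !![0, 1; -1, -1] f :=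
  sub2_eq_linSubst _ (by simp [linForm]) (by simp [linForm]; ring) f

lemma s₂_eq_linSubst (f : MvPowerSeries (Fin 2) ℂ) : s₂ f = linSubst !![1, 0; -1, -1] f :=
  sub2_eq_linSubst _ (by simp [linForm]) (by simp [linForm]; ring) f

lemma swapS_eq_linSubst (f : MvPowerSeries (Fin 2) ℂ) : swapS f = linSubst !![0, 1; 1, 0] f :=
  sub2_eq_linSubst _ (by simp [linForm]) (by simp [linForm]) f

lemma negS_eq_linSubst (f : MvPowerSeries (Fin 2) ℂ) : negS f = linSubst (-1) f :=
  sub2_eq_linSubst _ (by simp [linForm]) (by simp [linForm]) f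

lemma expMv_eq_exp_subst {g : MvPowerSeries (Fin 2) ℂ} (hg : constantCoeff g = 0) :
    expMv g = (PowerSeries.exp ℂ).subst g := by
  ext d
  rw [PowerSeries.coeff_subst (PowerSeries.HasSubst.of_constantCoeff_zero hg),
    finsum_eq_sum_of_support_subset (s := Finset.range (deg d + 1)), coeff_apply, expMv]
  · refine Finset.sum_congr rfl fun n _ => ?_
    simp [PowerSeries.coeff_exp, div_eq_inv_mul]
  · intro n hn
    by_contra! hlt
    rw [Finset.coe_range, Set.mem_Iio, not_lt, Nat.succ_le_iff, deg_eq_degree] at hlt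
    exact hn (by simp [coeff_pow_eq_zero_of_degree_lt hg hlt])

lemma expMv_eq_expLin {g : MvPowerSeries (Fin 2) ℂ} {v : Fin 2 → ℂ} (h : g = linForm v) :
    expMv g = expLin v := by
  rw [expMv_eq_exp_subst (by simp [h]), h, expLin]

lemma add_expMv_mul_s₁_add_expMv_mul_s₂ (O : MvPowerSeries (Fin 2) ℂ) :
    O + expMv (X 1) * s₁ O + expMv (-X 0) * s₂ O = hexagon O := by
  rw [s₁_eq_linSubst, s₂_eq_linSubst, expMv_eq_expLin (v := ![0, 1]) (by simp [linForm]),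
    expMv_eq_expLin (v := ![-1, 0]) (by simp [linForm]), hexagon]

lemma expMv_sub_expMv_eq_sinhLin :
    expMv (X 0 + X 1 : MvPowerSeries (Fin 2) ℂ) - expMv (-X 0 - X 1) = sinhLin ![1, 1] := by
  rw [sinhLin, expMv_eq_expLin (v := ![1, 1]) (by simp [linForm]),
    expMv_eq_expLin (v := ![-1, -1]) (by simp [linForm]; ring)]
  simp

end ExplicitSubstitutions

/-- let `O` be symmetric with `O(−λ,−μ) = −O(λ,μ)`. Then
`O + e^{μ}·O(μ,−λ−μ) + e^{−λ}·O(λ,−λ−μ) = 0` holds iff there is `h̃` with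
`h̃(λ,μ) = h̃(μ,λ) = h̃(−λ,−μ) = h̃(λ,−λ−μ)` such that `2·O = (e^{λ+μ} − e^{−λ−μ})·h̃`. -/
theorem odd_eq_iff_exists_htilde (O : MvPowerSeries (Fin 2) ℂ)
    (hsym : swapS O = O) (hodd : negS O = -O) :
    (O + expMv (X 1) * s₁ O + expMv (-X 0) * s₂ O = 0)
      ↔ ∃ ht : MvPowerSeries (Fin 2) ℂ,
          swapS ht = ht ∧ negS ht = ht ∧ s₂ ht = ht ∧
          2 * O = (expMv (X 0 + X 1) - expMv (-X 0 - X 1)) * ht := by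
  rw [add_expMv_mul_s₁_add_expMv_mul_s₂, expMv_sub_expMv_eq_sinhLin]
  simp only [swapS_eq_linSubst, negS_eq_linSubst, s₂_eq_linSubst] at hsym hodd ⊢
  constructor
  · intro hO
    obtain ⟨ht, hOh⟩ := exists_two_mul_eq_sinhLin_mul (linSubst_antidiag_eq_zero hodd hO)
    have hswap : linSubst !![0, 1; 1, 0] ht = ht :=
      linSubst_eq_self_of_two_mul_eq (sinhLin_ne_zero (by simp)) one_ne_zero hOh
        (by rw [hsym, one_smul]) (by rw [linSubst_sinhLin, one_smul]; simp)
    have hneg : linSubst (-1) ht = ht :=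
      linSubst_eq_self_of_two_mul_eq (sinhLin_ne_zero (by simp)) (neg_ne_zero.2 one_ne_zero) hOh
        (by rw [hodd, neg_one_smul])
        (by rw [linSubst_sinhLin, neg_one_smul, ← sinhLin_neg, Matrix.vecMul_neg, Matrix.vecMul_one])
    exact ⟨ht, hswap, hneg, linSubst_eq_self_of_hexagon hO hOh hswap, hOh⟩
  · rintro ⟨ht, hswap, -, hρ, hOh⟩
    exact hexagon_eq_zero hswap hρ hOh

end
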